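/- Let Q be a symmetric n×n real matrix, d ∈ ℝⁿ, A ∈ ℝ^{m×n}, b ∈ ℝᵐ. A point x̄ ∈ ℝⁿ is a local solution of the QP (i.e. x̄ ∈ F and there exists ε > 0 such that Φ(x̄) ≤ Φ(x) for all x ∈ F with ‖x − x̄‖ < ε) if and only if x̄ ∈ F and there exists λ̄ ∈ ℝᵐ with λ̄ ≥ 0, Qx̄ + d = −Aᵀλ̄, (Ax̄ − b)ᵀλ̄ = 0, and pᵀQp ≥ 0 for every p ∈ ℝⁿ satisfying a_iᵀp = 0 for all i with λ̄_i > 0 and a_iᵀp ≤ 0 for all i ∈ I_{x̄}. -/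

import Mathlib

/-!
Necessity: along a direction `p` of the tangent cone `{p | a_iᵀp ≤ 0 for i ∈ I_x̄}` the point
`x̄ + tp` stays feasible for small `t > 0`, so `Φ(x̄ + tp) - Φ(x̄) = 2t (Qx̄ + d)ᵀp + t² pᵀQp ≥ 0`.
The first-order part and Farkas' lemma give the multiplier `λ̄`; on the critical cone, where
`(Qx̄ + d)ᵀp = 0`, the second-order part gives `pᵀQp ≥ 0`.

Sufficiency: by a Hoffman-type error bound, every `p` of the tangent cone lies within
`M (Qx̄ + d)ᵀp` of a point `v` of the critical cone, where `vᵀQv ≥ 0`. Replacing `p` by `v` changes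
the quadratic term by `O(‖p‖ (Qx̄ + d)ᵀp)`, which the linear term absorbs for small `p`.

Farkas' lemma and the error bound both rest on the fact that a point `x` of a finitely generated
cone has a representation whose coefficients sum to at most `C‖x‖`.
-/

open Matrix

/-- The objective `Φ(x) = xᵀQx + 2dᵀx`. -/
noncomputable def Phi {n : ℕ} (Q : Matrix (Fin n) (Fin n) ℝ) (d : Fin n → ℝ)
    (x : Fin n → ℝ) : ℝ :=
  x ⬝ᵥ (Q *ᵥ x) + 2 * (d ⬝ᵥ x)

open Filter Topology Set PointedCone WithLp
open scoped RealInnerProductSpace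

lemma eventually_nonneg_add_mul {ι : Type*} [Finite ι] {f s : ι → ℝ} (hf : 0 ≤ f)
    (hs : ∀ i, f i = 0 → 0 ≤ s i) : ∀ᶠ t in 𝓝[>] 0, ∀ i, 0 ≤ f i + t * s i := by
  refine eventually_all.2 fun i => ?_
  rcases (hf i).eq_or_lt with h | h
  · filter_upwards [self_mem_nhdsWithin] with t (ht : 0 < t)
    simpa [← h] using mul_nonneg ht.le (hs i h.symm)
  · have : Tendsto (fun t => f i + t * s i) (𝓝 0) (𝓝 (f i)) :=
      (by fun_prop : Continuous fun t : ℝ => f i + t * s i).tendsto' 0 _ (by simp)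
    exact nhdsWithin_le_nhds ((this.eventually (lt_mem_nhds h)).mono fun _ => le_of_lt)

lemma nonneg_of_eventually_nonneg_mul_add_sq_mul {α β : ℝ}
    (h : ∀ᶠ t in 𝓝[>] 0, 0 ≤ t * α + t ^ 2 * β) : 0 ≤ α ∧ (α = 0 → 0 ≤ β) := by
  have hdiv : ∀ᶠ t in 𝓝[>] 0, 0 ≤ α + t * β := by
    filter_upwards [h, self_mem_nhdsWithin] with t ht (htpos : 0 < t)
    exact nonneg_of_mul_nonneg_right (by linarith) htpos
  have hlim : Tendsto (fun t => α + t * β) (𝓝[>] 0) (𝓝 α) :=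
    tendsto_nhdsWithin_of_tendsto_nhds <|
      (by fun_prop : Continuous fun t : ℝ => α + t * β).tendsto' 0 _ (by simp)
  refine ⟨ge_of_tendsto hlim hdiv, fun hα => ?_⟩
  obtain ⟨t, ht, htpos : 0 < t⟩ := (hdiv.and self_mem_nhdsWithin).exists
  rw [hα, zero_add] at ht
  exact nonneg_of_mul_nonneg_right ht htpos

section Hull

variable {E : Type*} {ι : Type*} [Fintype ι]

lemma mem_hull_range_iff [AddCommGroup E] [Module ℝ E] {g : ι → E} {x : E} :
    x ∈ hull ℝ (range g) ↔ ∃ μ : ι → ℝ, 0 ≤ μ ∧ ∑ i, μ i • g i = x := by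
  rw [Submodule.mem_span_range_iff_exists_fun]
  constructor
  · rintro ⟨c, rfl⟩
    exact ⟨fun i => c i, fun i => (c i).2, by simp only [Nonneg.coe_smul]⟩
  · rintro ⟨μ, hμ, rfl⟩
    exact ⟨fun i => ⟨μ i, hμ i⟩, by simp only [← Nonneg.coe_smul]⟩

lemma isCompact_nonneg_sum_le (M : ℝ) : IsCompact {μ : ι → ℝ | 0 ≤ μ ∧ ∑ i, μ i ≤ M} := by
  refine Metric.isCompact_of_isClosed_isBounded
    ((isClosed_le continuous_const continuous_id).inter
      (isClosed_le (by fun_prop : Continuous fun μ : ι → ℝ => ∑ i, μ i) continuous_const)) ?_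
  refine (Metric.isBounded_closedBall (x := 0) (r := M)).subset fun μ ⟨hμ, hM⟩ => ?_
  have hle : ∀ i, μ i ≤ M := fun i =>
    (Finset.single_le_sum (fun j _ => hμ j) (Finset.mem_univ i)).trans hM
  rw [mem_closedBall_zero_iff,
    pi_norm_le_iff_of_nonneg ((Finset.sum_nonneg fun i _ => hμ i).trans hM)]
  exact fun i => (Real.norm_of_nonneg (hμ i)).trans_le (hle i)

variable [NormedAddCommGroup E] [NormedSpace ℝ E]

lemma exists_rep_minimizing_sum {g : ι → E} {x : E} (hx : x ∈ hull ℝ (range g)) :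
    ∃ μ : ι → ℝ, 0 ≤ μ ∧ ∑ i, μ i • g i = x ∧
      ∀ ν : ι → ℝ, 0 ≤ ν → ∑ i, ν i • g i = x → ∑ i, μ i ≤ ∑ i, ν i := by
  obtain ⟨μ₀, hμ₀, hx₀⟩ := mem_hull_range_iff.1 hx
  have hS : IsCompact ({μ : ι → ℝ | 0 ≤ μ ∧ ∑ i, μ i ≤ ∑ i, μ₀ i} ∩
      {μ | ∑ i, μ i • g i = x}) :=
    (isCompact_nonneg_sum_le _).inter_right (isClosed_eq (by fun_prop) continuous_const)
  obtain ⟨μ, ⟨⟨hμ, -⟩, hμx⟩, hmin⟩ := hS.exists_isMinOn ⟨μ₀, ⟨hμ₀, le_rfl⟩, hx₀⟩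
    (by fun_prop : Continuous fun μ : ι → ℝ => ∑ i, μ i).continuousOn
  refine ⟨μ, hμ, hμx, fun ν hν hνx => ?_⟩
  by_cases hle : ∑ i, ν i ≤ ∑ i, μ₀ i
  · exact hmin ⟨⟨hν, hle⟩, hνx⟩
  · exact (hmin ⟨⟨hμ₀, le_rfl⟩, hx₀⟩).trans (le_of_not_ge hle)

lemma not_smul_le_of_rep_minimizing_sum {g : ι → E} {μ τ : ι → ℝ}
    (hmin : ∀ ν : ι → ℝ, 0 ≤ ν → ∑ i, ν i • g i = ∑ i, μ i • g i → ∑ i, μ i ≤ ∑ i, ν i)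
    (hτ : τ ∈ stdSimplex ℝ ι) (hτg : ∑ i, τ i • g i = 0) {c : ℝ} (hc : 0 < c) :
    ¬ c • τ ≤ μ := by
  intro hle
  have h := hmin (μ - c • τ) (sub_nonneg.2 hle) (by
    simp only [Pi.sub_apply, Pi.smul_apply, smul_eq_mul, sub_smul, Finset.sum_sub_distrib,
      mul_smul, ← Finset.smul_sum, hτg, smul_zero, sub_zero])
  simp only [Pi.sub_apply, Pi.smul_apply, smul_eq_mul, Finset.sum_sub_distrib, ← Finset.mul_sum,
    hτ.2, mul_one] at h
  linarith

theorem exists_rep_sum_le_mul_norm (g : ι → E) :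
    ∃ C, 0 ≤ C ∧ ∀ x ∈ hull ℝ (range g),
      ∃ μ : ι → ℝ, 0 ≤ μ ∧ ∑ i, μ i • g i = x ∧ ∑ i, μ i ≤ C * ‖x‖ := by
  by_contra! h
  have hseq : ∀ k : ℕ, ∃ μ : ι → ℝ, 0 ≤ μ ∧
      (∀ ν : ι → ℝ, 0 ≤ ν → ∑ i, ν i • g i = ∑ i, μ i • g i → ∑ i, μ i ≤ ∑ i, ν i) ∧
      (k + 1) * ‖∑ i, μ i • g i‖ < ∑ i, μ i := by
    intro k
    obtain ⟨x, hx, hbig⟩ := h (k + 1) (by positivity)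
    obtain ⟨μ, hμ, rfl, hmin⟩ := exists_rep_minimizing_sum hx
    exact ⟨μ, hμ, hmin, hbig μ hμ rfl⟩
  choose μ hμ hmin hbig using hseq
  have hs : ∀ k, 0 < ∑ i, μ k i := fun k => lt_of_le_of_lt (by positivity) (hbig k)
  -- Normalised to the simplex, these representations accumulate at a null combination `τ`.
  set σ : ℕ → ι → ℝ := fun k => (∑ i, μ k i)⁻¹ • μ k with hσ_def
  have hσ : ∀ k, σ k ∈ stdSimplex ℝ ι := fun k =>
    ⟨fun i => mul_nonneg (inv_nonneg.2 (hs k).le) (hμ k i), by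
      simp [hσ_def, ← Finset.mul_sum, (hs k).ne']⟩
  have hσ0 : Tendsto (fun k => ∑ i, σ k i • g i) atTop (𝓝 0) := by
    refine squeeze_zero_norm (fun k => ?_) tendsto_one_div_add_atTop_nhds_zero_nat
    rw [show ∑ i, σ k i • g i = (∑ i, μ k i)⁻¹ • ∑ i, μ k i • g i by
        simp [hσ_def, Finset.smul_sum, smul_smul],
      norm_smul, Real.norm_of_nonneg (inv_nonneg.2 (hs k).le), inv_mul_le_iff₀ (hs k),
      mul_one_div, le_div_iff₀ (by positivity)]
    linarith [hbig k]
  obtain ⟨τ, hτ, φ, hφ, hστ⟩ := (isCompact_stdSimplex ℝ ι).tendsto_subseq hσ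
  have hτg : ∑ i, τ i • g i = 0 := tendsto_nhds_unique
    (((by fun_prop : Continuous fun μ : ι → ℝ => ∑ i, μ i • g i).tendsto τ).comp hστ)
    (hσ0.comp hφ.tendsto_atTop)
  have hev : ∀ᶠ l in atTop, ∀ i, τ i / 2 ≤ σ (φ l) i := eventually_all.2 fun i => by
    rcases (hτ.1 i).eq_or_lt with h0 | hpos
    · exact Eventually.of_forall fun l => by simpa [← h0] using (hσ (φ l)).1 i
    · exact (((continuous_apply i).tendsto τ).comp hστ).eventually
        (le_mem_nhds (half_lt_self hpos))
  obtain ⟨l, hl⟩ := hev.exists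
  refine not_smul_le_of_rep_minimizing_sum (hmin (φ l)) hτ hτg (half_pos (hs (φ l))) fun i => ?_
  have hμσ : μ (φ l) i = (∑ i, μ (φ l) i) * σ (φ l) i := by
    simp [hσ_def, ← mul_assoc, mul_inv_cancel₀ (hs (φ l)).ne']
  have := mul_le_mul_of_nonneg_left (hl i) (hs (φ l)).le
  simp only [Pi.smul_apply, smul_eq_mul, hμσ]
  linarith

theorem isClosed_hull_range (g : ι → E) : IsClosed (hull ℝ (range g) : Set E) := by
  obtain ⟨C, hC, hrep⟩ := exists_rep_sum_le_mul_norm g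
  refine IsSeqClosed.isClosed fun {x y} hx hxy => ?_
  obtain ⟨R, hR⟩ := isBounded_iff_forall_norm_le.1 (Metric.isBounded_range_of_tendsto x hxy)
  choose μ hμ hμx hμC using fun k => hrep (x k) (hx k)
  obtain ⟨ν, ⟨hν, -⟩, φ, hφ, hμν⟩ := (isCompact_nonneg_sum_le (C * R)).tendsto_subseq
    fun k => ⟨hμ k, (hμC k).trans (mul_le_mul_of_nonneg_left (hR _ ⟨k, rfl⟩) hC)⟩
  refine mem_hull_range_iff.2 ⟨ν, hν, tendsto_nhds_unique
    (((by fun_prop : Continuous fun μ : ι → ℝ => ∑ i, μ i • g i).tendsto ν).comp hμν) ?_⟩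
  simpa only [Function.comp_def, hμx] using hxy.comp hφ.tendsto_atTop

end Hull

section Farkas

variable {E : Type*} [NormedAddCommGroup E] [InnerProductSpace ℝ E] [CompleteSpace E]
  {ι : Type*} [Fintype ι]

theorem mem_hull_range_of_forall_inner_nonneg {g : ι → E} {y : E}
    (h : ∀ z, (∀ i, 0 ≤ ⟪g i, z⟫) → 0 ≤ ⟪y, z⟫) : y ∈ hull ℝ (range g) := by
  by_contra hy
  obtain ⟨z, hz, hyz⟩ :=
    ProperCone.hyperplane_separation' (C := ⟨hull ℝ (range g), isClosed_hull_range g⟩) hy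
  exact hyz.not_ge (h z fun i => hz _ (subset_hull ⟨i, rfl⟩))

end Farkas

section ErrorBound

variable {E : Type*} [NormedAddCommGroup E] [InnerProductSpace ℝ E] [CompleteSpace E]
  {ι : Type*} [Fintype ι]

lemma sub_mem_hull_range_of_forall_inner_sub_nonpos {g : ι → E} {p v : E}
    (hv : v ∈ ProperCone.innerDual (range g))
    (hproj : ∀ w ∈ ProperCone.innerDual (range g), ⟪p - v, w - v⟫ ≤ 0) :
    v - p ∈ hull ℝ (range g) := by
  classical
  refine Submodule.span_mono (range_comp_subset_range Subtype.val g)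
    (mem_hull_range_of_forall_inner_nonneg (g := fun r : {r // ⟪g r, v⟫ = 0} => g r)
      fun z hz => ?_)
  obtain ⟨t, ht, htpos : 0 < t⟩ := ((eventually_nonneg_add_mul (f := fun r => ⟪g r, v⟫)
    (s := fun r => ⟪g r, z⟫) (fun r => hv ⟨r, rfl⟩) fun r hr => hz ⟨r, hr⟩).and
      self_mem_nhdsWithin).exists
  have h := hproj (v + t • z) (by
    rintro _ ⟨r, rfl⟩
    simpa [inner_add_right, real_inner_smul_right] using ht r)
  rw [add_sub_cancel_left, real_inner_smul_right] at h
  rw [← neg_sub, inner_neg_left]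
  nlinarith

theorem exists_mem_innerDual_norm_sub_le (g : ι → E) :
    ∃ L, 0 ≤ L ∧ ∀ p : E, ∀ β, 0 ≤ β → (∀ r, -β ≤ ⟪g r, p⟫) →
      ∃ v ∈ ProperCone.innerDual (range g), ‖p - v‖ ≤ L * β := by
  obtain ⟨C, hC, hrep⟩ := exists_rep_sum_le_mul_norm g
  refine ⟨C, hC, fun p β hβ hp => ?_⟩
  set D := ProperCone.innerDual (range g)
  obtain ⟨v, hvD, hv⟩ :=
    exists_norm_eq_iInf_of_complete_convex D.nonempty D.isClosed.isComplete D.convex p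
  rw [norm_eq_iInf_iff_real_inner_le_zero D.convex hvD] at hv
  obtain ⟨ν, hν, hνv, hνC⟩ := hrep _ (sub_mem_hull_range_of_forall_inner_sub_nonpos hvD hv)
  refine ⟨v, hvD, ?_⟩
  have h0 : 0 ≤ ⟪p - v, v⟫ := by simpa using hv 0 D.zero_mem
  have key : ‖p - v‖ ^ 2 ≤ β * C * ‖p - v‖ := calc
    ‖p - v‖ ^ 2 = ⟪p - v, p - v⟫ := (real_inner_self_eq_norm_sq _).symm
    _ ≤ ⟪p - v, p⟫ := by rw [inner_sub_right]; linarith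
    _ = ∑ r, ν r * -⟪g r, p⟫ := by
      simp [← neg_sub v p, ← hνv, sum_inner, real_inner_smul_left]
    _ ≤ ∑ r, ν r * β := Finset.sum_le_sum fun r _ =>
      mul_le_mul_of_nonneg_left (by linarith [hp r]) (hν r)
    _ ≤ β * C * ‖p - v‖ := by
      rw [← Finset.sum_mul, mul_comm, mul_assoc, norm_sub_rev]
      exact mul_le_mul_of_nonneg_left hνC hβ
  nlinarith [norm_nonneg (p - v), mul_nonneg hβ hC]

end ErrorBound

section SecondOrder

variable {E : Type*} [NormedAddCommGroup E] [InnerProductSpace ℝ E]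

lemma abs_inner_map_self_sub_le (T : E →L[ℝ] E) (p v : E) :
    |⟪p, T p⟫ - ⟪v, T v⟫| ≤ ‖T‖ * ‖p - v‖ * (‖p‖ + ‖v‖) := by
  have hsplit : ⟪p, T p⟫ - ⟪v, T v⟫ = ⟪p - v, T p⟫ + ⟪v, T (p - v)⟫ := by
    simp only [inner_sub_left, inner_sub_right, map_sub]
    ring
  have hbound : ∀ x y : E, |⟪x, T y⟫| ≤ ‖T‖ * ‖y‖ * ‖x‖ := fun x y =>
    (abs_real_inner_le_norm x (T y)).trans (by nlinarith [T.le_opNorm y, norm_nonneg x])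
  rw [hsplit]
  calc |⟪p - v, T p⟫ + ⟪v, T (p - v)⟫| ≤ ‖T‖ * ‖p‖ * ‖p - v‖ + ‖T‖ * ‖p - v‖ * ‖v‖ :=
        (abs_add_le _ _).trans (add_le_add (hbound _ _) (hbound _ _))
    _ = ‖T‖ * ‖p - v‖ * (‖p‖ + ‖v‖) := by ring

theorem eventually_nonneg_two_mul_inner_add_inner_map {K D : Set E} {c : E} (T : E →L[ℝ] E)
    {M : ℝ} (hM : 0 ≤ M) (hcK : ∀ p ∈ K, 0 ≤ ⟪c, p⟫)
    (hKD : ∀ p ∈ K, ∃ v ∈ D, ‖p - v‖ ≤ M * ⟪c, p⟫) (hD : ∀ v ∈ D, 0 ≤ ⟪v, T v⟫) :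
    ∀ᶠ p in 𝓝 0, p ∈ K → 0 ≤ 2 * ⟪c, p⟫ + ⟪p, T p⟫ := by
  -- the error of replacing `p` by `v` in the quadratic term is at most `k ‖p‖ ⟪c, p⟫`
  set k := ‖T‖ * M * (2 + M * ‖c‖)
  have hk : 0 ≤ k := by positivity
  filter_upwards [Metric.ball_mem_nhds (0 : E) (inv_pos.2 (by linarith : 0 < k + 1))]
    with p hp hpK
  rw [mem_ball_zero_iff] at hp
  have hkp : k * ‖p‖ ≤ 1 := by
    have := mul_lt_mul_of_pos_left hp (by linarith : 0 < k + 1)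
    rw [mul_inv_cancel₀ (by linarith)] at this
    nlinarith [norm_nonneg p]
  obtain ⟨v, hvD, hpv⟩ := hKD p hpK
  have hs := hcK p hpK
  have hv : ‖v‖ ≤ ‖p‖ + ‖p - v‖ := by simpa using norm_sub_le p (p - v)
  have hcross : ‖T‖ * ‖p - v‖ * (‖p‖ + ‖v‖) ≤ k * ⟪c, p⟫ * ‖p‖ := calc
    _ ≤ ‖T‖ * (M * ⟪c, p⟫) * (2 * ‖p‖ + M * (‖c‖ * ‖p‖)) := by
      refine mul_le_mul (mul_le_mul_of_nonneg_left hpv (norm_nonneg T)) ?_ (by positivity)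
        (by positivity)
      linarith [mul_le_mul_of_nonneg_left (real_inner_le_norm c p) hM]
    _ = k * ⟪c, p⟫ * ‖p‖ := by ring
  have hpTp := (abs_le.1 (abs_inner_map_self_sub_le T p v)).1
  nlinarith [hD v hvD, mul_le_mul_of_nonneg_left hkp hs]

end SecondOrder

section CriticalCone

variable {E : Type*} [NormedAddCommGroup E] [InnerProductSpace ℝ E] {ι : Type*}
  {a : ι → E} {lam : ι → ℝ} {I : Set ι}

lemma mul_inner_nonpos (hlam : 0 ≤ lam) (hsupp : ∀ i, 0 < lam i → i ∈ I) {p : E}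
    (hp : ∀ i ∈ I, ⟪a i, p⟫ ≤ 0) (i : ι) : lam i * ⟪a i, p⟫ ≤ 0 :=
  (hlam i).eq_or_lt.elim (fun h => by simp [← h])
    fun h => mul_nonpos_of_nonneg_of_nonpos h.le (hp i (hsupp i h))

variable [Fintype ι] [CompleteSpace E]

theorem exists_critical_norm_sub_le (hlam : 0 ≤ lam) (hsupp : ∀ i, 0 < lam i → i ∈ I) :
    ∃ M, 0 ≤ M ∧ ∀ p, (∀ i ∈ I, ⟪a i, p⟫ ≤ 0) →
      ∃ v, ((∀ i ∈ I, ⟪a i, v⟫ ≤ 0) ∧ ∀ i, 0 < lam i → ⟪a i, v⟫ = 0) ∧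
        ‖p - v‖ ≤ M * -∑ i, lam i * ⟪a i, p⟫ := by
  classical
  obtain ⟨L, hL, hbound⟩ := exists_mem_innerDual_norm_sub_le
    (Sum.elim (fun i : I => -a i) (fun i : {i // 0 < lam i} => a i))
  have hΛ : 0 ≤ ∑ i, (lam i)⁻¹ := Finset.sum_nonneg fun i _ => inv_nonneg.2 (hlam i)
  refine ⟨L * ∑ i, (lam i)⁻¹, mul_nonneg hL hΛ, fun p hp => ?_⟩
  set s := -∑ i, lam i * ⟪a i, p⟫
  have hterms := mul_inner_nonpos hlam hsupp hp
  have hs : 0 ≤ s := neg_nonneg.2 (Finset.sum_nonpos fun i _ => hterms i)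
  have hviol : ∀ i, 0 < lam i → -⟪a i, p⟫ ≤ (∑ i, (lam i)⁻¹) * s := by
    intro i hi
    have hterm : lam i * -⟪a i, p⟫ ≤ s := by
      rw [mul_neg, show s = ∑ j, -(lam j * ⟪a j, p⟫) from (Finset.sum_neg_distrib _).symm]
      exact Finset.single_le_sum (f := fun j => -(lam j * ⟪a j, p⟫))
        (fun j _ => neg_nonneg.2 (hterms j)) (Finset.mem_univ i)
    calc -⟪a i, p⟫ = (lam i)⁻¹ * (lam i * -⟪a i, p⟫) := by field_simp
      _ ≤ (lam i)⁻¹ * s := mul_le_mul_of_nonneg_left hterm (inv_nonneg.2 hi.le)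
      _ ≤ (∑ i, (lam i)⁻¹) * s := mul_le_mul_of_nonneg_right
        (Finset.single_le_sum (fun j _ => inv_nonneg.2 (hlam j)) (Finset.mem_univ i)) hs
  obtain ⟨v, hv, hpv⟩ := hbound p _ (mul_nonneg hΛ hs) (by
    rintro (⟨i, hi⟩ | ⟨i, hi⟩)
    · simpa [inner_neg_left] using (neg_nonpos.2 (mul_nonneg hΛ hs)).trans (neg_nonneg.2 (hp i hi))
    · simpa using neg_le.1 (hviol i hi))
  have hvI : ∀ i ∈ I, ⟪a i, v⟫ ≤ 0 := fun i hi => by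
    simpa [inner_neg_left] using hv ⟨Sum.inl ⟨i, hi⟩, rfl⟩
  refine ⟨v, ⟨hvI, fun i hi => (hvI i (hsupp i hi)).antisymm (hv ⟨Sum.inr ⟨i, hi⟩, rfl⟩)⟩, ?_⟩
  rwa [mul_assoc]

end CriticalCone

section QuadraticProgram

variable {E : Type*} [NormedAddCommGroup E] [InnerProductSpace ℝ E] {ι : Type*} [Fintype ι]
  {T : E →L[ℝ] E} {d : E} {a : ι → E} {b : ι → ℝ} {x₀ : E}

lemma inner_map_add_add_inner (hT : (T : E →ₗ[ℝ] E).IsSymmetric) (d x p : E) :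
    ⟪x + p, T (x + p)⟫ + 2 * ⟪d, x + p⟫ =
      ⟪x, T x⟫ + 2 * ⟪d, x⟫ + (2 * ⟪T x + d, p⟫ + ⟪p, T p⟫) := by
  have hsymm : ⟪p, T x⟫ = ⟪T x, p⟫ := by rw [real_inner_comm]
  have := hT x p
  simp only [ContinuousLinearMap.coe_coe] at this
  simp only [map_add, inner_add_left, inner_add_right]
  linarith

theorem IsLocalMinOn.inner_nonneg_of_feasible_dir (hT : (T : E →ₗ[ℝ] E).IsSymmetric)
    (hx₀ : ∀ i, ⟪a i, x₀⟫ ≤ b i)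
    (hmin : IsLocalMinOn (fun x => ⟪x, T x⟫ + 2 * ⟪d, x⟫) {x | ∀ i, ⟪a i, x⟫ ≤ b i} x₀)
    {p : E} (hp : ∀ i, ⟪a i, x₀⟫ = b i → ⟪a i, p⟫ ≤ 0) :
    0 ≤ ⟪T x₀ + d, p⟫ ∧ (⟪T x₀ + d, p⟫ = 0 → 0 ≤ ⟪p, T p⟫) := by
  have hfeas : ∀ᶠ t in 𝓝[>] (0 : ℝ), x₀ + t • p ∈ {x | ∀ i, ⟪a i, x⟫ ≤ b i} :=
    (eventually_nonneg_add_mul (f := fun i => b i - ⟪a i, x₀⟫) (s := fun i => -⟪a i, p⟫)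
      (fun i => sub_nonneg.2 (hx₀ i)) fun i hi => neg_nonneg.2 (hp i (sub_eq_zero.1 hi).symm)).mono
      fun t ht i => by
        have := ht i
        rw [inner_add_right, real_inner_smul_right]
        linarith
  have hray : Tendsto (fun t : ℝ => x₀ + t • p) (𝓝[>] 0) (𝓝[{x | ∀ i, ⟪a i, x⟫ ≤ b i}] x₀) :=
    tendsto_nhdsWithin_iff.2 ⟨tendsto_nhdsWithin_of_tendsto_nhds <|
      (by fun_prop : Continuous fun t : ℝ => x₀ + t • p).tendsto' 0 _ (by simp), hfeas⟩
  obtain ⟨h1, h2⟩ := nonneg_of_eventually_nonneg_mul_add_sq_mul (α := 2 * ⟪T x₀ + d, p⟫)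
    (β := ⟪p, T p⟫) ((hray.eventually hmin).mono fun t ht => by
      simp only [inner_map_add_add_inner hT, map_smul, real_inner_smul_left,
        real_inner_smul_right] at ht
      nlinarith)
  exact ⟨by linarith, fun h => h2 (by rw [h, mul_zero])⟩

variable [CompleteSpace E]

theorem IsLocalMinOn.exists_kkt (hT : (T : E →ₗ[ℝ] E).IsSymmetric)
    (hx₀ : ∀ i, ⟪a i, x₀⟫ ≤ b i)
    (hmin : IsLocalMinOn (fun x => ⟪x, T x⟫ + 2 * ⟪d, x⟫) {x | ∀ i, ⟪a i, x⟫ ≤ b i} x₀) :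
    ∃ lam : ι → ℝ, 0 ≤ lam ∧ T x₀ + d = -∑ i, lam i • a i ∧
      (∀ i, 0 < lam i → ⟪a i, x₀⟫ = b i) ∧
      ∀ p, (∀ i, 0 < lam i → ⟪a i, p⟫ = 0) → (∀ i, ⟪a i, x₀⟫ = b i → ⟪a i, p⟫ ≤ 0) →
        0 ≤ ⟪p, T p⟫ := by
  classical
  have hcone : -(T x₀ + d) ∈ hull ℝ (range fun i => if ⟪a i, x₀⟫ = b i then a i else 0) :=
    mem_hull_range_of_forall_inner_nonneg fun z hz => by
      have := (hmin.inner_nonneg_of_feasible_dir hT hx₀ (p := -z) fun i hi => by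
        simpa [hi, inner_neg_right] using hz i).1
      rw [inner_neg_right] at this
      rw [inner_neg_left]
      linarith
  obtain ⟨μ, hμ, hμc⟩ := mem_hull_range_iff.1 hcone
  set lam := fun i => if ⟪a i, x₀⟫ = b i then μ i else 0
  have hsupp : ∀ i, 0 < lam i → ⟪a i, x₀⟫ = b i := fun i hi => by
    by_contra h
    simp [lam, h] at hi
  have hc : T x₀ + d = -∑ i, lam i • a i := by
    rw [← neg_neg (T x₀ + d), ← hμc]
    congr 1
    refine Finset.sum_congr rfl fun i _ => ?_
    by_cases h : ⟪a i, x₀⟫ = b i <;> simp [lam, h]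
  have hlam : 0 ≤ lam := fun i => by
    by_cases h : ⟪a i, x₀⟫ = b i
    · simpa [lam, h] using hμ i
    · simp [lam, h]
  refine ⟨lam, hlam, hc, hsupp, fun p hpJ hpI => ?_⟩
  refine (hmin.inner_nonneg_of_feasible_dir hT hx₀ hpI).2 ?_
  rw [hc, inner_neg_left, sum_inner, neg_eq_zero]
  refine Finset.sum_eq_zero fun i _ => ?_
  rcases (hlam i).eq_or_lt with h | h
  · simp [← h]
  · simp [real_inner_smul_left, hpJ i h]

theorem isLocalMinOn_of_kkt (hT : (T : E →ₗ[ℝ] E).IsSymmetric) {lam : ι → ℝ} (hlam : 0 ≤ lam)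
    (hc : T x₀ + d = -∑ i, lam i • a i) (hsupp : ∀ i, 0 < lam i → ⟪a i, x₀⟫ = b i)
    (hsoc : ∀ p, (∀ i, 0 < lam i → ⟪a i, p⟫ = 0) → (∀ i, ⟪a i, x₀⟫ = b i → ⟪a i, p⟫ ≤ 0) →
      0 ≤ ⟪p, T p⟫) :
    IsLocalMinOn (fun x => ⟪x, T x⟫ + 2 * ⟪d, x⟫) {x | ∀ i, ⟪a i, x⟫ ≤ b i} x₀ := by
  set I := {i | ⟪a i, x₀⟫ = b i}
  obtain ⟨M, hM, hbound⟩ := exists_critical_norm_sub_le (a := a) (I := I) hlam hsupp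
  have hcp : ∀ p, ⟪T x₀ + d, p⟫ = -∑ i, lam i * ⟪a i, p⟫ := fun p => by
    simp [hc, sum_inner, real_inner_smul_left]
  have hgrowth := eventually_nonneg_two_mul_inner_add_inner_map (K := {p | ∀ i ∈ I, ⟪a i, p⟫ ≤ 0})
    (D := {v | (∀ i ∈ I, ⟪a i, v⟫ ≤ 0) ∧ ∀ i, 0 < lam i → ⟪a i, v⟫ = 0}) (c := T x₀ + d) T hM
    (fun p hp => (hcp p).symm ▸ neg_nonneg.2
      (Finset.sum_nonpos fun i _ => mul_inner_nonpos hlam hsupp hp i))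
    (fun p hp => by rw [hcp]; exact hbound p hp) fun v hv => hsoc v hv.2 hv.1
  have hsub : Tendsto (fun x => x - x₀) (𝓝 x₀) (𝓝 0) := tendsto_sub_nhds_zero_iff.2 tendsto_id
  filter_upwards [nhdsWithin_le_nhds (hsub.eventually hgrowth), self_mem_nhdsWithin]
    with x hx (hxP : ∀ i, ⟪a i, x⟫ ≤ b i)
  have hK : ∀ i ∈ I, ⟪a i, x - x₀⟫ ≤ 0 := fun i (hi : ⟪a i, x₀⟫ = b i) => by
    rw [inner_sub_right, hi]
    linarith [hxP i]
  have := inner_map_add_add_inner hT d x₀ (x - x₀)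
  rw [add_sub_cancel] at this
  linarith [hx hK]

theorem isLocalMinOn_iff_exists_kkt (hT : (T : E →ₗ[ℝ] E).IsSymmetric)
    (hx₀ : ∀ i, ⟪a i, x₀⟫ ≤ b i) :
    IsLocalMinOn (fun x => ⟪x, T x⟫ + 2 * ⟪d, x⟫) {x | ∀ i, ⟪a i, x⟫ ≤ b i} x₀ ↔
      ∃ lam : ι → ℝ, 0 ≤ lam ∧ T x₀ + d = -∑ i, lam i • a i ∧
        (∀ i, 0 < lam i → ⟪a i, x₀⟫ = b i) ∧
        ∀ p, (∀ i, 0 < lam i → ⟪a i, p⟫ = 0) → (∀ i, ⟪a i, x₀⟫ = b i → ⟪a i, p⟫ ≤ 0) →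
          0 ≤ ⟪p, T p⟫ :=
  ⟨(·.exists_kkt hT hx₀), fun ⟨_, hlam, hc, hsupp, hsoc⟩ =>
    isLocalMinOn_of_kkt hT hlam hc hsupp hsoc⟩

end QuadraticProgram

section Transfer

lemma isLocalMinOn_iff_exists_norm_sub_lt {F β : Type*} [SeminormedAddCommGroup F] [Preorder β]
    {f : F → β} {s : Set F} {a : F} :
    IsLocalMinOn f s a ↔ ∃ ε, 0 < ε ∧ ∀ x ∈ s, ‖x - a‖ < ε → f a ≤ f x := by
  simp only [IsLocalMinOn, IsMinFilter, eventually_nhdsWithin_iff, Metric.eventually_nhds_iff,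
    dist_eq_norm]
  exact exists_congr fun ε => and_congr_right fun _ => forall_congr' fun x => forall_comm

lemma Homeomorph.isLocalMinOn_comp_iff {α β γ : Type*} [TopologicalSpace α] [TopologicalSpace β]
    [Preorder γ] (e : α ≃ₜ β) {f : β → γ} {s : Set β} {a : α} :
    IsLocalMinOn (f ∘ e) (e ⁻¹' s) a ↔ IsLocalMinOn f s (e a) := by
  refine ⟨fun h => ?_, fun h => IsMinFilter.comp_tendsto h
    (e.continuous.continuousWithinAt.tendsto_nhdsWithin (mapsTo_preimage e s))⟩
  rw [← e.symm_apply_apply a] at h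
  have := IsMinFilter.comp_tendsto h
    (e.symm.continuous.continuousWithinAt.tendsto_nhdsWithin fun y hy => by simpa using hy)
  rwa [Function.comp_assoc, e.self_comp_symm, Function.comp_id] at this

lemma dotProduct_eq_zero_iff_of_nonpos_of_nonneg {m : Type*} [Fintype m] {u v : m → ℝ}
    (hu : u ≤ 0) (hv : 0 ≤ v) : u ⬝ᵥ v = 0 ↔ ∀ i, 0 < v i → u i = 0 := by
  rw [dotProduct, Finset.sum_eq_zero_iff_of_nonpos fun i _ =>
    mul_nonpos_of_nonpos_of_nonneg (hu i) (hv i)]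
  refine forall_congr' fun i => ?_
  simp only [Finset.mem_univ, true_implies, mul_eq_zero]
  exact ⟨fun h hi => h.resolve_right hi.ne',
    fun h => (hv i).eq_or_lt.elim (Or.inr ∘ Eq.symm) (Or.inl ∘ h)⟩

variable {n m : ℕ}

lemma mulVec_apply_eq_inner (A : Matrix (Fin m) (Fin n) ℝ) (x : Fin n → ℝ) (i : Fin m) :
    (A *ᵥ x) i = ⟪toLp 2 (A i), toLp 2 x⟫ := by
  simp [EuclideanSpace.inner_toLp_toLp, Matrix.mulVec, dotProduct_comm]

lemma Phi_eq_inner (Q : Matrix (Fin n) (Fin n) ℝ) (d x : Fin n → ℝ) :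
    Phi Q d x = ⟪toLp 2 x, toEuclideanCLM (𝕜 := ℝ) Q (toLp 2 x)⟫ + 2 * ⟪toLp 2 d, toLp 2 x⟫ := by
  simp [Phi, EuclideanSpace.inner_toLp_toLp, dotProduct_comm]

lemma isSymmetric_toEuclideanCLM {Q : Matrix (Fin n) (Fin n) ℝ} (hQ : Q.IsSymm) :
    (toEuclideanCLM (𝕜 := ℝ) Q : EuclideanSpace ℝ (Fin n) →ₗ[ℝ] _).IsSymmetric := by
  rw [Matrix.coe_toEuclideanCLM_eq_toEuclideanLin, Matrix.isSymmetric_toEuclideanLin_iff]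
  simpa [Matrix.IsHermitian, Matrix.conjTranspose_eq_transpose_of_trivial] using hQ.eq

lemma mulVec_add_eq_neg_transpose_iff (Q : Matrix (Fin n) (Fin n) ℝ) (A : Matrix (Fin m) (Fin n) ℝ)
    (d x : Fin n → ℝ) (lam : Fin m → ℝ) :
    Q *ᵥ x + d = -(Aᵀ *ᵥ lam) ↔
      toEuclideanCLM (𝕜 := ℝ) Q (toLp 2 x) + toLp 2 d = -∑ i, lam i • toLp 2 (A i) := by
  rw [← (WithLp.toLp_injective 2).eq_iff]
  simp [Matrix.mulVec_transpose, Matrix.vecMul_eq_sum, WithLp.toLp_sum]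

end Transfer

/-- second-order characterization of local solutions,
Mangasarian / Contesse. `x̄` is a local solution of the QP iff `x̄` is feasible,
satisfies the KKT conditions with some multiplier `λ̄ ≥ 0`, and `pᵀQp ≥ 0` for every
`p` in the cone `{p : a_iᵀp = 0 ∀ i ∈ J_λ̄, a_iᵀp ≤ 0 ∀ i ∈ I_x̄}`. -/
theorem local_solution_iff_second_order {n m : ℕ}
    (Q : Matrix (Fin n) (Fin n) ℝ) (hQ : Q.IsSymm)
    (d : Fin n → ℝ) (A : Matrix (Fin m) (Fin n) ℝ) (b : Fin m → ℝ)
    (xbar : Fin n → ℝ) :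
    (A *ᵥ xbar ≤ b ∧ ∃ ε : ℝ, 0 < ε ∧ ∀ x : Fin n → ℝ, A *ᵥ x ≤ b →
        ‖x - xbar‖ < ε → Phi Q d xbar ≤ Phi Q d x) ↔
      (A *ᵥ xbar ≤ b ∧ ∃ lam : Fin m → ℝ, 0 ≤ lam ∧
        Q *ᵥ xbar + d = -(Aᵀ *ᵥ lam) ∧ (A *ᵥ xbar - b) ⬝ᵥ lam = 0 ∧
        ∀ p : Fin n → ℝ, (∀ i : Fin m, 0 < lam i → (A *ᵥ p) i = 0) →
          (∀ i : Fin m, (A *ᵥ xbar) i = b i → (A *ᵥ p) i ≤ 0) →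
          0 ≤ p ⬝ᵥ (Q *ᵥ p)) := by
  set e := (EuclideanSpace.equiv (Fin n) ℝ).symm.toHomeomorph
  set T := toEuclideanCLM (𝕜 := ℝ) Q
  have hF : {x | A *ᵥ x ≤ b} = e ⁻¹' {y | ∀ i, ⟪toLp 2 (A i), y⟫ ≤ b i} := by
    ext x
    simp [Pi.le_def, mulVec_apply_eq_inner, e]
  have hΦ : Phi Q d = (fun y => ⟪y, T y⟫ + 2 * ⟪toLp 2 d, y⟫) ∘ e :=
    funext (Phi_eq_inner Q d)
  refine and_congr_right fun hx => ?_
  refine (isLocalMinOn_iff_exists_norm_sub_lt (s := {x | A *ᵥ x ≤ b})).symm.trans ?_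
  rw [hΦ, hF, e.isLocalMinOn_comp_iff, isLocalMinOn_iff_exists_kkt (isSymmetric_toEuclideanCLM hQ)
    fun i => by simpa [e, mulVec_apply_eq_inner] using hx i]
  refine exists_congr fun lam => and_congr_right fun hlam => ?_
  rw [mulVec_add_eq_neg_transpose_iff, dotProduct_eq_zero_iff_of_nonpos_of_nonneg
    (sub_nonpos.2 hx) hlam]
  have hquad : ∀ p : Fin n → ℝ, p ⬝ᵥ Q *ᵥ p = ⟪toLp 2 p, T (toLp 2 p)⟫ := fun p =>
    (Matrix.inner_toEuclideanCLM Q _ _).symm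
  simp only [Pi.sub_apply, sub_eq_zero, mulVec_apply_eq_inner, hquad]
  exact and_congr Iff.rfl (and_congr Iff.rfl
    ⟨fun h p => h (toLp 2 p), fun h q => h (ofLp q)⟩)
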